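/- Let C be the 6×6 matrix over GF(3) with 2×2 block form [[O,O,C₀],[O,C₀,O],[C₀,O,O]] where C₀ = [[2,1],[0,1]], and let D be the 6×6 matrix over GF(3) with rows [1,1,0,0,0,0], [1,0,0,0,0,0], [0,0,0,0,2,2], [0,0,0,0,0,1], [0,1,0,1,0,1], [1,0,1,0,1,0]. Then C and D are invertible and satisfy the relations C² = 1, D⁸ = 1, C·D⁴ = D⁴·C, (C·D)⁵ = 1, and (C⁻¹D⁻¹CD)³ = 1. -/

import Mathlib

open Matrix

abbrev F3 := ZMod 3
abbrev V6 := Fin 6 → F3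

/-- The line (2-dim subspace) represented by a 2×6 matrix: the span of its rows. -/
def lineOf (A : Matrix (Fin 2) (Fin 6) F3) : Submodule F3 V6 :=
  Submodule.span F3 (Set.range A)

/-- The perp of a subspace `W` with respect to a 6×6 Gram matrix `M`:
`{x | xᵀ M w = 0 for all w ∈ W}`. -/
def perp (M : Matrix (Fin 6) (Fin 6) F3) (W : Submodule F3 V6) : Submodule F3 V6 where
  carrier := {x | ∀ w ∈ W, x ⬝ᵥ M.mulVec w = 0}
  add_mem' := by
    intro a b ha hb w hw
    simp only [Set.mem_setOf_eq] at *
    rw [add_dotProduct, ha w hw, hb w hw, add_zero]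
  zero_mem' := by
    intro w hw
    exact zero_dotProduct _
  smul_mem' := by
    intro c x hx w hw
    simp only [Set.mem_setOf_eq] at *
    rw [smul_dotProduct, hx w hw, smul_zero]

/-- A 2×6 matrix built from three 2×2 blocks. -/
def blk3 (A B C : Matrix (Fin 2) (Fin 2) F3) : Matrix (Fin 2) (Fin 6) F3 :=
  Matrix.of fun i j => ![A, B, C] ⟨(j : ℕ) / 2, by omega⟩ i ⟨(j : ℕ) % 2, by omega⟩

/-- A 6×6 matrix built from nine 2×2 blocks. -/
def blk33 (M : Matrix (Fin 3) (Fin 3) (Matrix (Fin 2) (Fin 2) F3)) :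
    Matrix (Fin 6) (Fin 6) F3 :=
  Matrix.of fun i j =>
    M ⟨(i : ℕ) / 2, by omega⟩ ⟨(j : ℕ) / 2, by omega⟩ ⟨(i : ℕ) % 2, by omega⟩ ⟨(j : ℕ) % 2, by omega⟩

/-- The 2×2 block of a 6×6 matrix in block-position `(i, j)`. -/
def blkAt (M : Matrix (Fin 6) (Fin 6) F3) (i j : Fin 3) : Matrix (Fin 2) (Fin 2) F3 :=
  Matrix.of fun a b => M ⟨2 * (i : ℕ) + (a : ℕ), by omega⟩ ⟨2 * (j : ℕ) + (b : ℕ), by omega⟩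

/-- Two (not necessarily distinct) lines are opposite w.r.t. `M` if `ℓ ∩ m^⊥ = 0`. -/
def Opp (M : Matrix (Fin 6) (Fin 6) F3) (ℓ m : Submodule F3 V6) : Prop :=
  ℓ ⊓ perp M m = ⊥

/-- The matrix `C`, with block form `[[O,O,C₀],[O,C₀,O],[C₀,O,O]]`, `C₀ = [[2,1],[0,1]]`. -/
def Cmat : Matrix (Fin 6) (Fin 6) F3 :=
  blk33 !![0, 0, !![2, 1; 0, 1]; 0, !![2, 1; 0, 1], 0; !![2, 1; 0, 1], 0, 0]

/-- The matrix `D`. -/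
def Dmat : Matrix (Fin 6) (Fin 6) F3 :=
  !![1, 1, 0, 0, 0, 0;
     1, 0, 0, 0, 0, 0;
     0, 0, 0, 0, 2, 2;
     0, 0, 0, 0, 0, 1;
     0, 1, 0, 1, 0, 1;
     1, 0, 1, 0, 1, 0]

/-! Every relation is a finite computation over `GF(3)`. The relations `C² = 1` and `D⁸ = 1`
make `C` and `D` invertible with `C⁻¹ = C` and `D⁻¹ = D⁷`, which turns the commutator relation
into a relation between positive words in `C` and `D`. -/

theorem Matrix.inv_eq_pow_of_pow_succ_eq_one {n R : Type*} [Fintype n] [DecidableEq n]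
    [CommRing R] {A : Matrix n n R} {k : ℕ} (h : A ^ (k + 1) = 1) : A⁻¹ = A ^ k :=
  inv_eq_left_inv (by rwa [← pow_succ])

theorem Cmat_sq : Cmat ^ 2 = 1 := by decide

theorem Dmat_pow_eight : Dmat ^ 8 = 1 := by decide

theorem Cmat_inv : Cmat⁻¹ = Cmat := by
  simpa using Matrix.inv_eq_pow_of_pow_succ_eq_one Cmat_sq

theorem Dmat_inv : Dmat⁻¹ = Dmat ^ 7 :=
  Matrix.inv_eq_pow_of_pow_succ_eq_one Dmat_pow_eight

theorem Cmat_mul_Dmat_pow_four_comm : Cmat * Dmat ^ 4 = Dmat ^ 4 * Cmat := by decide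

theorem Cmat_mul_Dmat_pow_five : (Cmat * Dmat) ^ 5 = 1 := by decide

theorem Cmat_mul_Dmat_pow_seven_mul_Cmat_mul_Dmat_pow_three :
    (Cmat * Dmat ^ 7 * Cmat * Dmat) ^ 3 = 1 := by
  decide

/-- The matrices `C` and `D` are invertible and satisfy
`C² = 1`, `D⁸ = 1`, `C D⁴ = D⁴ C`, `(C D)⁵ = 1` and `(C⁻¹ D⁻¹ C D)³ = 1`. -/
theorem stmt8 :
    IsUnit Cmat ∧ IsUnit Dmat ∧
    Cmat ^ 2 = 1 ∧ Dmat ^ 8 = 1 ∧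
    Cmat * Dmat ^ 4 = Dmat ^ 4 * Cmat ∧
    (Cmat * Dmat) ^ 5 = 1 ∧
    (Cmat⁻¹ * Dmat⁻¹ * Cmat * Dmat) ^ 3 = 1 := by
  refine ⟨.of_pow_eq_one Cmat_sq two_ne_zero, .of_pow_eq_one Dmat_pow_eight (by norm_num),
    Cmat_sq, Dmat_pow_eight, Cmat_mul_Dmat_pow_four_comm, Cmat_mul_Dmat_pow_five, ?_⟩
  rw [Cmat_inv, Dmat_inv]
  exact Cmat_mul_Dmat_pow_seven_mul_Cmat_mul_Dmat_pow_three
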